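/- arXiv:1611.05472 — 2 statements merged into one kernel-verified Lean document; each statement's English description precedes it below -/
import Mathlib

section
/- There exists a constant C > 0 such that for all signs μ, ν ∈ {+1, −1} and all ξ, η ∈ ℝ² with ξ ≠ 0, η ≠ 0, and ξ ≠ η: |∇_η Φ^{μ,ν}(ξ, η)| + |∇_ξ Φ^{μ,ν}(ξ, η)| ≤ C max{|ξ|, |η|} (|ξ| + |η| + 1)^{−1/2}. -/
noncomputable section

abbrev E2 : Type := EuclideanSpace ℝ (Fin 2)

/-- Euclidean dot product on ℝ². -/
def dotE (x y : E2) : ℝ := ∑ i : Fin 2, x i * y i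

/-- `Λ(r) = r^{3/2} (tanh r)^{1/2}`. -/
def Lam (r : ℝ) : ℝ := r ^ ((3 : ℝ) / 2) * Real.sqrt (Real.tanh r)

/-- `λ(x) = Λ(√x)`. -/
def lam (x : ℝ) : ℝ := Lam (Real.sqrt x)

/-- The phase `Φ^{μ,ν}(ξ,η) = Λ(|ξ|) − μ Λ(|ξ−η|) − ν Λ(|η|)`. -/
def Phi (μ ν : ℝ) (ξ η : E2) : ℝ := Lam ‖ξ‖ - μ * Lam ‖ξ - η‖ - ν * Lam ‖η‖

/-!
The η-gradient of `Φ` is `μ Λ'(|ξ-η|) (ξ-η)/|ξ-η| - ν Λ'(|η|) η/|η|`, and similarly in `ξ`,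
so both gradients are bounded by sums of `Λ'(|x|)` over `x ∈ {ξ, η, ξ-η}`, all with
`|x| ≤ 2 max{|ξ|, |η|}`. It therefore suffices that `Λ'(r) ≤ 5 r / √(r + 1)`, a bound increasing
in `r`. In `Λ'(r) = (3/2) √(r tanh r) + r^{3/2} / (2 cosh² r √(tanh r))` the first term is
controlled by `tanh r ≤ min(r, 1)`, the second by `tanh r ≥ r / (r + 1)` and `4 cosh² r ≥ r + 1`.
-/

namespace Real

lemma hasDerivAt_tanh (x : ℝ) : HasDerivAt tanh (1 / cosh x ^ 2) x := by
  have h := (hasDerivAt_sinh x).div (hasDerivAt_cosh x) (cosh_pos x).ne'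
  rw [show tanh = sinh / cosh from funext tanh_eq_sinh_div_cosh]
  refine h.congr_deriv ?_
  rw [← cosh_sq_sub_sinh_sq x]
  ring

lemma tanh_pos {x : ℝ} (hx : 0 < x) : 0 < tanh x := by
  rw [tanh_eq_sinh_div_cosh]
  exact div_pos (sinh_pos_iff.2 hx) (cosh_pos x)

lemma tanh_le_self {x : ℝ} (hx : 0 ≤ x) : tanh x ≤ x := by
  have hderiv (y : ℝ) : HasDerivAt (fun y => y - tanh y) (1 - 1 / cosh y ^ 2) y :=
    (hasDerivAt_id y).sub (hasDerivAt_tanh y)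
  have hmono : Monotone (fun y => y - tanh y) := by
    refine monotone_of_deriv_nonneg (fun y => (hderiv y).differentiableAt) fun y => ?_
    rw [(hderiv y).deriv, sub_nonneg, div_le_one (by positivity)]
    nlinarith [one_le_cosh y]
  simpa using hmono hx

lemma self_le_tanh_mul_add_one (x : ℝ) : x ≤ tanh x * (x + 1) := by
  have h2x := add_one_le_exp (2 * x)
  rw [show 2 * x = x + x by ring, exp_add] at h2x
  have hinv : exp x * exp (-x) = 1 := by rw [← exp_add, add_neg_cancel, exp_zero]
  rw [tanh_eq, div_mul_eq_mul_div, le_div_iff₀ (by positivity)]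
  -- cleared of denominators, this says `e^{-x} (e^{2x} - 1 - 2x) ≥ 0`
  nlinarith [mul_nonneg (exp_pos (-x)).le (sub_nonneg.2 h2x), congrArg (· * exp x) hinv]

lemma add_one_le_four_mul_cosh_sq (x : ℝ) : x + 1 ≤ 4 * cosh x ^ 2 := by
  have h2x := add_one_le_exp (2 * x)
  rw [show 2 * x = x + x by ring, exp_add] at h2x
  have : exp x ≤ 2 * cosh x := by rw [cosh_eq]; linarith [exp_pos (-x)]
  nlinarith [one_le_cosh x, exp_pos x]

end Real

open Real

/-- The derivative of `Lam` on `(0, ∞)`. -/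
def Lam' (r : ℝ) : ℝ := 3 / 2 * √r * √(tanh r) + r * √r / (2 * cosh r ^ 2 * √(tanh r))

lemma hasDerivAt_Lam {r : ℝ} (hr : 0 < r) : HasDerivAt Lam (Lam' r) r := by
  have hpow : HasDerivAt (fun x : ℝ => x ^ ((3 : ℝ) / 2)) (3 / 2 * √r) r := by
    convert hasDerivAt_rpow_const (p := 3 / 2) (Or.inl hr.ne') using 1
    rw [sqrt_eq_rpow]; norm_num
  have hsqrt : HasDerivAt (fun x => √(tanh x)) (1 / (2 * √(tanh r)) * (1 / cosh r ^ 2)) r :=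
    (hasDerivAt_sqrt (tanh_pos hr).ne').comp r (hasDerivAt_tanh r)
  refine (hpow.mul hsqrt).congr_deriv ?_
  rw [Lam', show (3 : ℝ) / 2 = 1 + 1 / 2 by norm_num, rpow_add hr, rpow_one, ← sqrt_eq_rpow]
  field_simp

lemma Lam'_nonneg {r : ℝ} (hr : 0 < r) : 0 ≤ Lam' r := by
  have := tanh_pos hr
  unfold Lam'
  positivity

lemma Lam'_mul_sqrt_le {r : ℝ} (hr : 0 < r) : Lam' r * √(r + 1) ≤ 5 * r := by
  have ht := tanh_pos hr
  have ht_le := tanh_le_self hr.le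
  have ht_one := (tanh_lt_one r).le
  have ht_ge := self_le_tanh_mul_add_one r
  have hc := add_one_le_four_mul_cosh_sq r
  have hfirst : 3 / 2 * √r * √(tanh r) * √(r + 1) ≤ 3 / 2 * (3 / 2 * r) := by
    rw [mul_assoc _ √r, ← sqrt_mul hr.le, mul_assoc, ← sqrt_mul (by positivity)]
    gcongr
    rw [sqrt_le_iff]
    constructor
    · positivity
    · nlinarith [mul_le_mul_of_nonneg_left ht_le hr.le,
        mul_le_mul_of_nonneg_left ht_one (sq_nonneg r)]
  have hsqrt_le : √r * √(r + 1) ≤ 4 * cosh r ^ 2 * √(tanh r) := by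
    rw [← sqrt_mul hr.le, show 4 * cosh r ^ 2 = √((4 * cosh r ^ 2) ^ 2) by
      rw [sqrt_sq (by positivity)], ← sqrt_mul (by positivity)]
    apply sqrt_le_sqrt
    nlinarith [mul_le_mul hc hc (by linarith) (by positivity)]
  have hsecond : r * √r / (2 * cosh r ^ 2 * √(tanh r)) * √(r + 1) ≤ 2 * r := by
    rw [div_mul_eq_mul_div, div_le_iff₀ (by positivity)]
    nlinarith [mul_le_mul_of_nonneg_left hsqrt_le hr.le]
  rw [Lam', add_mul]
  linarith

lemma div_sqrt_add_one_le_div_sqrt_add_one {a b : ℝ} (ha : 0 ≤ a) (hab : a ≤ b) :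
    a / √(a + 1) ≤ b / √(b + 1) := by
  have hb : 0 ≤ b := ha.trans hab
  have hsq : √(a ^ 2 * (b + 1)) ≤ √(b ^ 2 * (a + 1)) :=
    sqrt_le_sqrt <| by
      nlinarith [mul_le_mul hab hab ha hb, mul_nonneg (mul_nonneg ha hb) (sub_nonneg.2 hab)]
  rw [sqrt_mul' _ (by positivity), sqrt_mul' _ (by positivity), sqrt_sq ha, sqrt_sq hb] at hsq
  rwa [div_le_div_iff₀ (by positivity) (by positivity)]

lemma Lam'_le_div_sqrt {r a s : ℝ} (hr : 0 < r) (hra : r ≤ a) (hs : 0 ≤ s) (hsa : s ≤ a) :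
    Lam' r ≤ 5 * a / √(s + 1) := by
  calc Lam' r ≤ 5 * (r / √(r + 1)) := by
        rw [← mul_div_assoc, le_div_iff₀ (by positivity)]
        exact Lam'_mul_sqrt_le hr
    _ ≤ 5 * (a / √(a + 1)) := by
        gcongr 5 * ?_
        exact div_sqrt_add_one_le_div_sqrt_add_one hr.le hra
    _ ≤ 5 * a / √(s + 1) := by
        rw [mul_div_assoc]
        gcongr
        linarith

section
variable {E : Type*} [NormedAddCommGroup E] [InnerProductSpace ℝ E]

lemma exists_hasFDerivAt_Lam_norm {x : E} (hx : x ≠ 0) :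
    ∃ L : E →L[ℝ] ℝ, HasFDerivAt (fun y : E => Lam ‖y‖) L x ∧ ‖L‖ ≤ Lam' ‖x‖ := by
  have hx' : 0 < ‖x‖ := norm_pos_iff.2 hx
  have hnorm := ((contDiffAt_norm ℝ hx (n := 1)).differentiableAt one_ne_zero).hasFDerivAt
  refine ⟨_, (hasDerivAt_Lam hx').comp_hasFDerivAt x hnorm, ?_⟩
  calc ‖Lam' ‖x‖ • fderiv ℝ (‖·‖) x‖ = Lam' ‖x‖ * ‖fderiv ℝ (‖·‖) x‖ := by
        rw [norm_smul, norm_of_nonneg (Lam'_nonneg hx')]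
    _ ≤ Lam' ‖x‖ * 1 := by
        gcongr
        · exact Lam'_nonneg hx'
        · exact NNReal.coe_one ▸ norm_fderiv_le_of_lipschitz ℝ lipschitzWith_one_norm
    _ = Lam' ‖x‖ := mul_one _

lemma norm_gradient_eq_norm_fderiv [CompleteSpace E] (f : E → ℝ) (x : E) :
    ‖gradient f x‖ = ‖fderiv ℝ f x‖ :=
  (InnerProductSpace.toDual ℝ E).symm.norm_map _

end

lemma norm_fderiv_Phi_right_le {μ ν : ℝ} (hμ : |μ| ≤ 1) (hν : |ν| ≤ 1) {ξ η : E2} (hη : η ≠ 0)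
    (hξη : ξ ≠ η) :
    ‖fderiv ℝ (fun ζ : E2 => Phi μ ν ξ ζ) η‖ ≤ Lam' ‖ξ - η‖ + Lam' ‖η‖ := by
  obtain ⟨L₁, hL₁, hL₁_le⟩ := exists_hasFDerivAt_Lam_norm (sub_ne_zero.2 hξη.symm)
  obtain ⟨L₂, hL₂, hL₂_le⟩ := exists_hasFDerivAt_Lam_norm hη
  rw [norm_sub_rev] at hL₁_le
  have hL₁' : HasFDerivAt (fun ζ : E2 => Lam ‖ξ - ζ‖) L₁ η := by
    simp_rw [norm_sub_rev ξ]
    exact (hasFDerivAt_comp_sub ξ).2 hL₁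
  have hΦ : HasFDerivAt (fun ζ => Phi μ ν ξ ζ) (0 - μ • L₁ - ν • L₂) η :=
    ((hasFDerivAt_const (Lam ‖ξ‖) η).sub (hL₁'.const_mul μ)).sub (hL₂.const_mul ν)
  rw [hΦ.fderiv, zero_sub]
  calc ‖-(μ • L₁) - ν • L₂‖ ≤ |μ| * ‖L₁‖ + |ν| * ‖L₂‖ := by
        refine (norm_sub_le _ _).trans_eq ?_
        rw [norm_neg, norm_smul, norm_smul, Real.norm_eq_abs, Real.norm_eq_abs]
    _ ≤ 1 * Lam' ‖ξ - η‖ + 1 * Lam' ‖η‖ := by gcongr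
    _ = Lam' ‖ξ - η‖ + Lam' ‖η‖ := by ring

lemma norm_fderiv_Phi_left_le {μ ν : ℝ} (hμ : |μ| ≤ 1) {ξ η : E2} (hξ : ξ ≠ 0) (hξη : ξ ≠ η) :
    ‖fderiv ℝ (fun ζ : E2 => Phi μ ν ζ η) ξ‖ ≤ Lam' ‖ξ‖ + Lam' ‖ξ - η‖ := by
  obtain ⟨L₀, hL₀, hL₀_le⟩ := exists_hasFDerivAt_Lam_norm hξ
  obtain ⟨L₁, hL₁, hL₁_le⟩ := exists_hasFDerivAt_Lam_norm (sub_ne_zero.2 hξη)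
  have hΦ : HasFDerivAt (fun ζ => Phi μ ν ζ η) (L₀ - μ • L₁) ξ :=
    (hL₀.sub (((hasFDerivAt_comp_sub η).2 hL₁).const_mul μ)).sub_const (ν * Lam ‖η‖)
  rw [hΦ.fderiv]
  calc ‖L₀ - μ • L₁‖ ≤ ‖L₀‖ + |μ| * ‖L₁‖ := by
        refine (norm_sub_le _ _).trans_eq ?_
        rw [norm_smul, Real.norm_eq_abs]
    _ ≤ Lam' ‖ξ‖ + 1 * Lam' ‖ξ - η‖ := by gcongr
    _ = Lam' ‖ξ‖ + Lam' ‖ξ - η‖ := by ring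

theorem stmt10 :
    ∃ C : ℝ, 0 < C ∧
      ∀ μ ν : ℝ, (μ = 1 ∨ μ = -1) → (ν = 1 ∨ ν = -1) →
        ∀ ξ η : E2, ξ ≠ 0 → η ≠ 0 → ξ ≠ η →
          ‖gradient (fun ζ : E2 => Phi μ ν ξ ζ) η‖ + ‖gradient (fun ζ : E2 => Phi μ ν ζ η) ξ‖ ≤
            C * max ‖ξ‖ ‖η‖ * (‖ξ‖ + ‖η‖ + 1) ^ (-(1 / 2) : ℝ) := by
  refine ⟨40, by norm_num, fun μ ν hμ hν ξ η hξ hη hξη => ?_⟩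
  have hμ' : |μ| ≤ 1 := by rcases hμ with rfl | rfl <;> norm_num
  have hν' : |ν| ≤ 1 := by rcases hν with rfl | rfl <;> norm_num
  set M := max ‖ξ‖ ‖η‖
  have hξM : ‖ξ‖ ≤ M := le_max_left _ _
  have hηM : ‖η‖ ≤ M := le_max_right _ _
  have hLam' (x : E2) (hx : x ≠ 0) (hxM : ‖x‖ ≤ 2 * M) :
      Lam' ‖x‖ ≤ 5 * (2 * M) / √(‖ξ‖ + ‖η‖ + 1) :=
    Lam'_le_div_sqrt (norm_pos_iff.2 hx) hxM (by positivity) (by linarith)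
  have hξ' := hLam' ξ hξ (by linarith [norm_nonneg ξ])
  have hη' := hLam' η hη (by linarith [norm_nonneg η])
  have hξη' := hLam' (ξ - η) (sub_ne_zero.2 hξη) (by linarith [norm_sub_le ξ η])
  rw [norm_gradient_eq_norm_fderiv, norm_gradient_eq_norm_fderiv, rpow_neg (by positivity),
    ← sqrt_eq_rpow]
  calc _ ≤ (Lam' ‖ξ - η‖ + Lam' ‖η‖) + (Lam' ‖ξ‖ + Lam' ‖ξ - η‖) :=
        add_le_add (norm_fderiv_Phi_right_le hμ' hν' hη hξη) (norm_fderiv_Phi_left_le hμ' hξ hξη)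
    _ ≤ 4 * (5 * (2 * M) / √(‖ξ‖ + ‖η‖ + 1)) := by linarith
    _ = 40 * M * (√(‖ξ‖ + ‖η‖ + 1))⁻¹ := by ring

end
end

section
/- There exist constants c, C > 0 such that for every ξ ∈ ℝ² with ξ ≠ 0, the phase evaluated at the space resonance point η = ξ/2 satisfies c Λ(|ξ|) ≤ Φ^{+1,+1}(ξ, ξ/2) = Λ(|ξ|) − 2 Λ(|ξ|/2) ≤ C Λ(|ξ|). -/
noncomputable section

lemma tanh_mono {a b : ℝ} (h : a ≤ b) : Real.tanh a ≤ Real.tanh b := by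
  rw [Real.tanh_eq_sinh_div_cosh, Real.tanh_eq_sinh_div_cosh,
    div_le_div_iff₀ (Real.cosh_pos a) (Real.cosh_pos b)]
  have := Real.sinh_nonneg_iff.2 (sub_nonneg.2 h)
  rw [Real.sinh_sub] at this
  linarith

lemma tanh_nonneg' {a : ℝ} (h : 0 ≤ a) : 0 ≤ Real.tanh a := by
  have := tanh_mono h
  simpa [Real.tanh_zero] using this

lemma Lam_nonneg {r : ℝ} (h : 0 ≤ r) : 0 ≤ Lam r :=
  mul_nonneg (Real.rpow_nonneg h _) (Real.sqrt_nonneg _)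

lemma key {r : ℝ} (h : 0 ≤ r) : 2 * Lam (r / 2) ≤ (3 / 4) * Lam r := by
  have h2 : 0 ≤ r / 2 := by linarith
  have ht : Real.sqrt (Real.tanh (r / 2)) ≤ Real.sqrt (Real.tanh r) :=
    Real.sqrt_le_sqrt (tanh_mono (by linarith))
  have hpow : (r / 2) ^ ((3 : ℝ) / 2) = r ^ ((3 : ℝ) / 2) / 2 ^ ((3 : ℝ) / 2) := by
    rw [div_eq_mul_inv r, Real.mul_rpow h (by norm_num), Real.inv_rpow (by norm_num)]
    ring
  have h2pow : (8 : ℝ) / 3 ≤ 2 ^ ((3 : ℝ) / 2) := by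
    have : ((8 : ℝ) / 3) ^ (2 : ℕ) ≤ (2 ^ ((3 : ℝ) / 2)) ^ (2 : ℕ) := by
      rw [← Real.rpow_natCast (2 ^ ((3:ℝ)/2)) 2, ← Real.rpow_mul (by norm_num)]
      norm_num
    exact le_of_pow_le_pow_left₀ (by norm_num) (Real.rpow_nonneg (by norm_num) _) this
  have hrp : 0 ≤ r ^ ((3 : ℝ) / 2) := Real.rpow_nonneg h _
  unfold Lam
  rw [hpow]
  have hst : 0 ≤ Real.sqrt (Real.tanh r) := Real.sqrt_nonneg _
  calc 2 * (r ^ ((3:ℝ)/2) / 2 ^ ((3:ℝ)/2) * Real.sqrt (Real.tanh (r/2)))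
      ≤ 2 * (r ^ ((3:ℝ)/2) / 2 ^ ((3:ℝ)/2) * Real.sqrt (Real.tanh r)) := by
        apply mul_le_mul_of_nonneg_left _ (by norm_num)
        exact mul_le_mul_of_nonneg_left ht
          (div_nonneg hrp (Real.rpow_nonneg (by norm_num) _))
    _ ≤ (3/4) * (r ^ ((3:ℝ)/2) * Real.sqrt (Real.tanh r)) := by
        have hB : (0:ℝ) < 2 ^ ((3:ℝ)/2) := Real.rpow_pos_of_pos (by norm_num) _
        have he : 2 * (r ^ ((3:ℝ)/2) / 2 ^ ((3:ℝ)/2) * Real.sqrt (Real.tanh r))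
            = 2 * r ^ ((3:ℝ)/2) * Real.sqrt (Real.tanh r) / 2 ^ ((3:ℝ)/2) := by ring
        rw [he, div_le_iff₀ hB]
        nlinarith [mul_nonneg hrp hst]

theorem stmt16 :
    ∃ c C : ℝ, 0 < c ∧ 0 < C ∧
      ∀ ξ : E2, ξ ≠ 0 →
        c * Lam ‖ξ‖ ≤ Phi 1 1 ξ ((2⁻¹ : ℝ) • ξ) ∧
        Phi 1 1 ξ ((2⁻¹ : ℝ) • ξ) = Lam ‖ξ‖ - 2 * Lam (‖ξ‖ / 2) ∧
        Phi 1 1 ξ ((2⁻¹ : ℝ) • ξ) ≤ C * Lam ‖ξ‖ := by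
  refine ⟨1/4, 1, by norm_num, by norm_num, fun ξ hξ => ?_⟩
  have hsub : ξ - (2⁻¹ : ℝ) • ξ = (2⁻¹ : ℝ) • ξ := by
    have : ξ = (1:ℝ) • ξ := (one_smul ℝ ξ).symm
    nth_rewrite 1 [this]
    rw [← sub_smul]; norm_num
  have hnorm : ‖(2⁻¹ : ℝ) • ξ‖ = ‖ξ‖ / 2 := by
    rw [norm_smul]; simp [div_eq_inv_mul]
  have hPhi : Phi 1 1 ξ ((2⁻¹ : ℝ) • ξ) = Lam ‖ξ‖ - 2 * Lam (‖ξ‖ / 2) := by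
    unfold Phi
    rw [hsub, hnorm]; ring
  have hn : 0 ≤ ‖ξ‖ := norm_nonneg _
  have hk := key hn
  have hL2 : 0 ≤ Lam (‖ξ‖ / 2) := Lam_nonneg (by linarith)
  refine ⟨?_, hPhi, ?_⟩ <;> rw [hPhi] <;> linarith
end
end
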